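/- arXiv:2107.00634 — 5 statements merged into one kernel-verified Lean document; each statement's English description precedes it below -/
import Mathlib

section
/- Let U ⊆ ℝⁿ be open, X: U → ℝⁿ a C^l vector field (l ∈ ℕ ∪ {∞}), and K ⊆ U compact. Then there exists a C^∞ function f: U → (0,∞) with f ≡ 1 on K such that the local flow of the vector field fX is complete, i.e. every maximal solution of ẋ = f(x)X(x) is defined for all t ∈ ℝ. -/
open Set

noncomputable section

abbrev Euc (n : ℕ) := EuclideanSpace ℝ (Fin n)

/-- `p 0, …, p m` is an `(ε,T)`-chain for the flow `Φ` in `U`. -/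
def IsEpsTChain {n : ℕ} (Φ : ℝ → Euc n → Euc n) (U : Set (Euc n))
    (ε : Euc n → ℝ) (T : ℝ) (m : ℕ) (p : ℕ → Euc n) : Prop :=
  1 ≤ m ∧ (∀ i ≤ m, p i ∈ U) ∧
    ∃ t : ℕ → ℝ, ∀ i < m, T ≤ t i ∧ ‖Φ (t i) (p i) - p (i + 1)‖ ≤ ε (Φ (t i) (p i))

/-- The chain recurrent set of the flow `Φ` on `U`. -/
def chainRecurrentSet {n : ℕ} (Φ : ℝ → Euc n → Euc n) (U : Set (Euc n)) : Set (Euc n) :=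
  {p | p ∈ U ∧ ∀ T > (0:ℝ), ∀ ε : Euc n → ℝ, ContinuousOn ε U → (∀ x ∈ U, 0 < ε x) →
    ∃ m q, IsEpsTChain Φ U ε T m q ∧ q 0 = p ∧ q m = p}

/-- Chain equivalence: `p ∼ q` iff there is `T > 0` such that for all continuous positive `ε`
there is an `(ε,T)`-chain from `p` to `p` containing `q`. -/
def ChainEquiv {n : ℕ} (Φ : ℝ → Euc n → Euc n) (U : Set (Euc n)) (p q : Euc n) : Prop :=
  ∃ T > (0:ℝ), ∀ ε : Euc n → ℝ, ContinuousOn ε U → (∀ x ∈ U, 0 < ε x) →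
    ∃ m r, IsEpsTChain Φ U ε T m r ∧ r 0 = p ∧ r m = p ∧ ∃ i ≤ m, r i = q

/-- `Φ` is the complete flow of the vector field `X` on `U`: orbits stay in `U`, start at the
initial point, solve `ẋ = X(x)` and are the unique such global solutions. -/
def IsCompleteFlow {n : ℕ} (X : Euc n → Euc n) (U : Set (Euc n))
    (Φ : ℝ → Euc n → Euc n) : Prop :=
  (∀ p ∈ U, ∀ t : ℝ, Φ t p ∈ U) ∧
  (∀ p ∈ U, Φ 0 p = p) ∧
  (∀ p ∈ U, ∀ t : ℝ, HasDerivAt (fun s => Φ s p) (X (Φ t p)) t) ∧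
  (∀ p ∈ U, ∀ γ : ℝ → Euc n, γ 0 = p → (∀ t, γ t ∈ U) →
    (∀ t, HasDerivAt γ (X (γ t)) t) → ∀ t, γ t = Φ t p)

/-- The orbital derivative `∇τ(p)·X(p)`. -/
def orbDeriv {n : ℕ} (X : Euc n → Euc n) (τ : Euc n → ℝ) (p : Euc n) : ℝ :=
  inner ℝ (gradient τ p) (X p)

/-- A `C^l` Lyapunov function for `X` on `U`. -/
def IsLyapunov {n : ℕ} (X : Euc n → Euc n) (U : Set (Euc n)) (l : ℕ∞)
    (τ : Euc n → ℝ) : Prop :=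
  ContDiffOn ℝ l τ U ∧ (∀ p ∈ U, orbDeriv X τ p ≤ 0) ∧
    ∀ p ∈ U, gradient τ p ≠ 0 → orbDeriv X τ p < 0

/-- A complete Lyapunov function: a Lyapunov function, strictly decreasing along orbits outside
the chain recurrent set, whose set of critical values is nowhere dense, and whose critical level
sets intersected with the chain recurrent set are chain transitive components. -/
def IsCompleteLyapunov {n : ℕ} (X : Euc n → Euc n) (U : Set (Euc n))
    (Φ : ℝ → Euc n → Euc n) (l : ℕ∞) (τ : Euc n → ℝ) : Prop :=
  IsLyapunov X U l τ ∧
  (∀ p ∈ U \ chainRecurrentSet Φ U, ∀ t > (0:ℝ), τ (Φ t p) < τ p) ∧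
  interior (closure (τ '' chainRecurrentSet Φ U)) = ∅ ∧
  ∀ c ∈ τ '' chainRecurrentSet Φ U, ∃ p ∈ chainRecurrentSet Φ U,
    τ ⁻¹' {c} ∩ chainRecurrentSet Φ U = {q ∈ chainRecurrentSet Φ U | ChainEquiv Φ U p q}

/-!
Let `r` be a `1`-Lipschitz function with `ball x (r x) ⊆ U` (the distance to `Uᶜ`). If a `C¹`
field `Y` on `U` satisfies `‖Y‖ ≤ C r`, then on `closedBall x (r x / 2) ⊆ U` we have
`‖Y‖ ≤ 3 C (r x / 2)`, so Picard–Lindelöf gives through every point of `U` an integral curve in `U`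
defined for a time `1 / (3 C)` that does not depend on the point. Gluing such curves end to end
gives global integral curves, unique by local Lipschitz continuity, hence a complete flow.
A field `f X` of this kind with `f = 1` on `K` is obtained from a smooth `f` with
`0 < f ≤ C r / (1 + ‖X‖)`, where `C` is so large that the right-hand side exceeds `1` on `K`.
-/

open Metric Filter Topology
open scoped NNReal ContDiff

theorem IsOpen.exists_lipschitzWith_ball_subset {α : Type*} [PseudoMetricSpace α] {U : Set α}
    (hU : IsOpen U) :
    ∃ r : α → ℝ, LipschitzWith 1 r ∧ (∀ x ∈ U, 0 < r x) ∧ ∀ x ∈ U, ball x (r x) ⊆ U := by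
  rcases Uᶜ.eq_empty_or_nonempty with hUc | hUc
  · exact ⟨fun _ => 1, LipschitzWith.const' 1, fun _ _ => one_pos,
      fun _ _ => by simp [compl_empty_iff.mp hUc]⟩
  refine ⟨(infDist · Uᶜ), lipschitz_infDist_pt Uᶜ, fun x hx => ?_, fun x _ => ?_⟩
  · exact (hU.isClosed_compl.notMem_iff_infDist_pos hUc).mp (not_not_intro hx)
  · simpa using ball_infDist_subset_compl (x := x) (s := Uᶜ)

section

variable {E : Type*} [NormedAddCommGroup E] [NormedSpace ℝ E]

open scoped Manifold in
theorem IsOpen.exists_contDiffOn_pos_le_eqOn_one [FiniteDimensional ℝ E] {U : Set E}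
    (hU : IsOpen U) {g : E → ℝ} (hg : ContinuousOn g U) (hg0 : ∀ x ∈ U, 0 < g x)
    {K : Set E} (hK : IsClosed K) (hKg : ∀ x ∈ K, 1 < g x) :
    ∃ f : E → ℝ, ContDiffOn ℝ ∞ f U ∧ (∀ x ∈ U, 0 < f x ∧ f x ≤ g x) ∧ EqOn f 1 (K ∩ U) := by
  classical
  let M : TopologicalSpace.Opens E := ⟨U, hU⟩
  have : LocallyCompactSpace M := hU.isOpenEmbedding_subtypeVal.locallyCompactSpace
  have hgM : Continuous fun y : M => g y := hg.domRestrict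
  let t (y : M) : Set ℝ := Ioc 0 (g y) ∩ if (y : E) ∈ K then {1} else univ
  have ht : ∀ x : M, ∃ c : ℝ, ∀ᶠ y in 𝓝 x, c ∈ t y := by
    intro x
    by_cases hx : (x : E) ∈ K
    · refine ⟨1, ?_⟩
      filter_upwards [continuousAt_const.eventually_lt hgM.continuousAt (hKg x hx)] with y hy
      exact ⟨⟨one_pos, hy.le⟩, by split_ifs <;> simp⟩
    · refine ⟨g x / 2, ?_⟩
      have hx0 : 0 < g x := hg0 x x.2
      filter_upwards [continuousAt_const.eventually_lt hgM.continuousAt (half_lt_self hx0),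
        (hK.isOpen_compl.preimage continuous_subtype_val).mem_nhds hx] with y hy hyK
      exact ⟨⟨by positivity, hy.le⟩, by simp [show (y : E) ∉ K from hyK]⟩
  obtain ⟨F, hF⟩ := exists_contMDiffMap_forall_mem_convex_of_local_const (n := ⊤) 𝓘(ℝ, E)
    (fun y => (convex_Ioc _ _).inter (by split_ifs; exacts [convex_singleton 1, convex_univ])) ht
  set f : E → ℝ := fun x => if hx : x ∈ U then F ⟨x, hx⟩ else 0
  have hfF : (fun y : M => f y) = F := funext fun y => dif_pos y.2
  refine ⟨f, fun x hx => ?_, fun x hx => ?_, fun x hx => ?_⟩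
  · have hF' : ContMDiffAt 𝓘(ℝ, E) 𝓘(ℝ, ℝ) (⊤ : ℕ∞) (fun y : M => f y) ⟨x, hx⟩ :=
      hfF ▸ F.contMDiff.contMDiffAt
    exact (contMDiffAt_subtype_iff.mp hF').contDiffAt.contDiffWithinAt
  · simpa [f, dif_pos hx] using (hF ⟨x, hx⟩).1
  · simpa [f, t, dif_pos hx.2, hx.1] using (hF ⟨x, hx.2⟩).2

theorem IsOpen.exists_contDiffOn_smul_norm_le_mul [FiniteDimensional ℝ E] {U : Set E}
    (hU : IsOpen U) {X : E → E} (hX : ContinuousOn X U) {r : E → ℝ} (hr : ContinuousOn r U)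
    (hr0 : ∀ x ∈ U, 0 < r x) {K : Set E} (hK : IsCompact K) (hKU : K ⊆ U) :
    ∃ C > 0, ∃ f : E → ℝ, ContDiffOn ℝ ∞ f U ∧ (∀ x ∈ U, 0 < f x) ∧ (∀ x ∈ K, f x = 1) ∧
      ∀ x ∈ U, ‖f x • X x‖ ≤ C * r x := by
  have hXc : ContinuousOn (fun x => ‖X x‖) U := hX.norm
  obtain ⟨B, hB⟩ := (hK.image_of_continuousOn ((continuousOn_const.add (hXc.mono hKU)).div
    (hr.mono hKU) fun x hx => (hr0 x (hKU hx)).ne')).isBounded.bddAbove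
  set C := max B 0 + 1
  have hC : 0 < C := by positivity
  obtain ⟨f, hf, hfg, hfK⟩ := hU.exists_contDiffOn_pos_le_eqOn_one
    (g := fun x => C * r x / (1 + ‖X x‖))
    ((continuousOn_const.mul hr).div (continuousOn_const.add hXc) fun x _ => by positivity)
    (fun x hx => by have := hr0 x hx; positivity) hK.isClosed fun x hx => by
      have hBx : (1 + ‖X x‖) / r x ≤ B := hB (mem_image_of_mem _ hx)
      rw [div_le_iff₀ (hr0 x (hKU hx))] at hBx
      rw [one_lt_div (by positivity)]
      nlinarith [le_max_left B 0, hr0 x (hKU hx)]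
  refine ⟨C, hC, f, hf, fun x hx => (hfg x hx).1, fun x hx => hfK ⟨hx, hKU hx⟩, fun x hx => ?_⟩
  calc ‖f x • X x‖ = f x * ‖X x‖ := by rw [norm_smul, Real.norm_of_nonneg (hfg x hx).1.le]
    _ ≤ C * r x / (1 + ‖X x‖) * ‖X x‖ := by gcongr; exact (hfg x hx).2
    _ ≤ C * r x := by
      rw [div_mul_eq_mul_div, div_le_iff₀ (by positivity)]
      nlinarith [hr0 x hx, norm_nonneg (X x)]

-- The public Picard–Lindelöf theorems do not record that the solution stays in the ball; the
-- fixed point of `ODE.FunSpace.next` they are built from does.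
theorem IsPicardLindelof.exists_mapsTo_closedBall_isIntegralCurveOn [CompleteSpace E]
    {f : ℝ → E → E} {tmin tmax : ℝ} {t₀ : Icc tmin tmax} {x₀ : E} {a L K : ℝ≥0}
    (hf : IsPicardLindelof f t₀ x₀ a 0 L K) :
    ∃ α : ℝ → E, α t₀ = x₀ ∧ MapsTo α (Icc tmin tmax) (closedBall x₀ a) ∧
      IsIntegralCurveOn α f (Icc tmin tmax) := by
  obtain ⟨α, hα⟩ := ODE.FunSpace.exists_isFixedPt_next hf (mem_closedBall_self le_rfl)
  refine ⟨α.compProj, by rw [ODE.FunSpace.compProj_val, ← hα, ODE.FunSpace.next_apply₀],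
    fun t _ => α.compProj_mem_closedBall hf.mul_max_le, fun t ht => ?_⟩
  refine ODE.hasDerivWithinAt_picard_Icc t₀.2 hf.continuousOn_uncurry
    α.continuous_compProj.continuousOn (fun _ _ => α.compProj_mem_closedBall hf.mul_max_le)
    x₀ ht |>.congr_of_mem (fun t' ht' => ?_) ht
  nth_rw 1 [← hα]
  rw [ODE.FunSpace.compProj_of_mem ht', ODE.FunSpace.next_apply]

theorem IsIntegralCurveOn.hasDerivWithinAt_of_eqOn {v : ℝ → E → E} {γ η : ℝ → E} {s : Set ℝ}
    (hγ : IsIntegralCurveOn γ v s) (hs : IsClosed s) (hηγ : EqOn η γ s) (t : ℝ) :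
    HasDerivWithinAt η (v t (η t)) s t := by
  by_cases ht : t ∈ s
  · rw [hηγ ht]
    exact (hγ t ht).congr hηγ (hηγ ht)
  · exact hasDerivWithinAt_iff_hasFDerivWithinAt.mpr (.of_notMem_closure (by rwa [hs.closure_eq]))

theorem IsIntegralCurveOn.piecewise_Icc {v : ℝ → E → E} {γ δ : ℝ → E} {a b c : ℝ}
    (hγ : IsIntegralCurveOn γ v (Icc a b)) (hδ : IsIntegralCurveOn δ v (Icc b c))
    (hb : γ b = δ b) :
    IsIntegralCurveOn ((Iic b).piecewise γ δ) v (Icc a c) ∧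
      EqOn ((Iic b).piecewise γ δ) γ (Icc a b) ∧ EqOn ((Iic b).piecewise γ δ) δ (Icc b c) := by
  classical
  have hηγ : EqOn ((Iic b).piecewise γ δ) γ (Icc a b) := fun t ht =>
    piecewise_eq_of_mem _ _ _ ht.2
  have hηδ : EqOn ((Iic b).piecewise γ δ) δ (Icc b c) := fun t ht => by
    rcases ht.1.eq_or_lt with rfl | hlt
    · exact (piecewise_eq_of_mem _ _ _ self_mem_Iic).trans hb
    · exact piecewise_eq_of_notMem _ _ _ (not_le.mpr hlt)
  refine ⟨fun t _ => ?_, hηγ, hηδ⟩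
  exact ((hγ.hasDerivWithinAt_of_eqOn isClosed_Icc hηγ t).union
    (hδ.hasDerivWithinAt_of_eqOn isClosed_Icc hηδ t)).mono Icc_subset_Icc_union_Icc

variable {U : Set E} {Y : E → E}

theorem ContDiffOn.locallyLipschitzOn_of_isOpen (hY : ContDiffOn ℝ 1 Y U) (hU : IsOpen U) :
    LocallyLipschitzOn U Y := fun _ hx =>
  let ⟨K, t, ht, hK⟩ := (hY.contDiffAt (hU.mem_nhds hx)).exists_lipschitzOnWith
  ⟨K, t, nhdsWithin_le_nhds ht, hK⟩

theorem isIntegralCurveOn_Ioo_eqOn_of_contDiffOn (hU : IsOpen U) (hY : ContDiffOn ℝ 1 Y U)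
    {γ₁ γ₂ : ℝ → E} {a b t₀ : ℝ} (ht₀ : t₀ ∈ Ioo a b)
    (hγ₁ : IsIntegralCurveOn γ₁ (fun _ => Y) (Ioo a b)) (hγ₁U : MapsTo γ₁ (Ioo a b) U)
    (hγ₂ : IsIntegralCurveOn γ₂ (fun _ => Y) (Ioo a b)) (hγ₂U : MapsTo γ₂ (Ioo a b) U)
    (heq : γ₁ t₀ = γ₂ t₀) : EqOn γ₁ γ₂ (Ioo a b) := by
  intro t ht
  set a' := (a + min t t₀) / 2
  set b' := (max t t₀ + b) / 2
  have hsub : Icc a' b' ⊆ Ioo a b := Icc_subset_Ioo (by grind) (by grind)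
  have hcont₁ : ContinuousOn γ₁ (Icc a' b') := hγ₁.continuousOn.mono hsub
  have hcont₂ : ContinuousOn γ₂ (Icc a' b') := hγ₂.continuousOn.mono hsub
  -- on the compact union of the two trajectories, the locally Lipschitz field is Lipschitz
  set S := γ₁ '' Icc a' b' ∪ γ₂ '' Icc a' b'
  have hSU : S ⊆ U :=
    union_subset (hγ₁U.mono_left hsub).image_subset (hγ₂U.mono_left hsub).image_subset
  have hS : IsCompact S :=
    (isCompact_Icc.image_of_continuousOn hcont₁).union (isCompact_Icc.image_of_continuousOn hcont₂)
  obtain ⟨L, hL⟩ :=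
    ((hY.locallyLipschitzOn_of_isOpen hU).mono hSU).exists_lipschitzOnWith_of_compact hS
  have hderiv {γ : ℝ → E} (hγ : IsIntegralCurveOn γ (fun _ => Y) (Ioo a b)) :
      ∀ s ∈ Ioo a' b', HasDerivAt γ (Y (γ s)) s := fun s hs =>
    have hs' := hsub (Ioo_subset_Icc_self hs)
    (hγ s hs').hasDerivAt (isOpen_Ioo.mem_nhds hs')
  exact ODE_solution_unique_of_mem_Icc (v := fun _ => Y) (s := fun _ => S) (fun _ _ => hL)
    (show t₀ ∈ Ioo a' b' by grind) hcont₁ (hderiv hγ₁)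
    (fun s hs => Or.inl (mem_image_of_mem _ (Ioo_subset_Icc_self hs))) hcont₂ (hderiv hγ₂)
    (fun s hs => Or.inr (mem_image_of_mem _ (Ioo_subset_Icc_self hs))) heq
    (show t ∈ Icc a' b' by grind)

def HasUniformIntegralCurvesIn (Y : E → E) (U : Set E) (ε : ℝ) : Prop :=
  ∀ x ∈ U, ∀ t₀ : ℝ, ∃ γ : ℝ → E, γ t₀ = x ∧ MapsTo γ (Icc (t₀ - ε) (t₀ + ε)) U ∧
    IsIntegralCurveOn γ (fun _ => Y) (Icc (t₀ - ε) (t₀ + ε))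

theorem hasUniformIntegralCurvesIn_of_norm_le_mul [FiniteDimensional ℝ E]
    (hY : ContDiffOn ℝ 1 Y U) {r : E → ℝ} (hr : LipschitzWith 1 r) (hr0 : ∀ x ∈ U, 0 < r x)
    (hrU : ∀ x ∈ U, ball x (r x) ⊆ U) {C : ℝ} (hC : 0 < C) (hYr : ∀ x ∈ U, ‖Y x‖ ≤ C * r x) :
    HasUniformIntegralCurvesIn Y U (3 * C)⁻¹ := by
  intro x hx t₀
  have hball : closedBall x (r x / 2) ⊆ U :=
    (closedBall_subset_ball (half_lt_self (hr0 x hx))).trans (hrU x hx)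
  obtain ⟨L, hL⟩ := (hY.mono hball).exists_lipschitzOnWith one_ne_zero (convex_closedBall _ _)
    (isCompact_closedBall _ _)
  have hbound : ∀ y ∈ closedBall x (r x / 2), ‖Y y‖ ≤ 3 * C * (r x / 2) := fun y hy =>
    calc ‖Y y‖ ≤ C * r y := hYr y (hball hy)
      _ ≤ C * (r x + 1 * dist y x) := by gcongr; exact hr.le_add_mul y x
      _ ≤ 3 * C * (r x / 2) := by nlinarith [mem_closedBall.mp hy]
  have hε : 0 < (3 * C)⁻¹ := by positivity
  have ht₀ : t₀ ∈ Icc (t₀ - (3 * C)⁻¹) (t₀ + (3 * C)⁻¹) := ⟨by linarith, by linarith⟩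
  have hpl : IsPicardLindelof (fun _ => Y) (⟨t₀, ht₀⟩ : Icc _ _) x
      ⟨r x / 2, by linarith [hr0 x hx]⟩ 0 ⟨3 * C * (r x / 2), by nlinarith [hr0 x hx]⟩ L :=
    .of_time_independent hbound hL <| by
      show 3 * C * (r x / 2) * max (t₀ + (3 * C)⁻¹ - t₀) (t₀ - (t₀ - (3 * C)⁻¹)) ≤ r x / 2 - 0
      rw [add_sub_cancel_left, sub_sub_cancel, max_self, sub_zero, mul_right_comm,
        mul_inv_cancel₀ (by positivity), one_mul]
  obtain ⟨γ, hγ0, hγB, hγ⟩ := hpl.exists_mapsTo_closedBall_isIntegralCurveOn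
  exact ⟨γ, hγ0, hγB.mono_right hball, hγ⟩

namespace HasUniformIntegralCurvesIn

variable {ε : ℝ}

theorem exists_extension (h : HasUniformIntegralCurvesIn Y U ε) (hε : 0 ≤ ε) {T : ℝ}
    (hT : 0 ≤ T) {γ : ℝ → E} (hγU : MapsTo γ (Icc (-T) T) U)
    (hγ : IsIntegralCurveOn γ (fun _ => Y) (Icc (-T) T)) :
    ∃ θ : ℝ → E, EqOn θ γ (Icc (-T) T) ∧ MapsTo θ (Icc (-T - ε) (T + ε)) U ∧
      IsIntegralCurveOn θ (fun _ => Y) (Icc (-T - ε) (T + ε)) := by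
  classical
  obtain ⟨δ, hδT, hδU, hδ⟩ := h (γ T) (hγU ⟨by linarith, le_rfl⟩) T
  have hsub : Icc T (T + ε) ⊆ Icc (T - ε) (T + ε) := Icc_subset_Icc (by linarith) le_rfl
  obtain ⟨hη, hηγ, hηδ⟩ := hγ.piecewise_Icc (hδ.mono hsub) hδT.symm
  have hηU : MapsTo ((Iic T).piecewise γ δ) (Icc (-T) (T + ε)) U :=
    ((hγU.congr hηγ.symm).union ((hδU.mono_left hsub).congr hηδ.symm)).mono_left
      Icc_subset_Icc_union_Icc
  obtain ⟨ζ, hζT, hζU, hζ⟩ := h _ (hηU ⟨le_rfl, by linarith⟩) (-T)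
  have hsub' : Icc (-T - ε) (-T) ⊆ Icc (-T - ε) (-T + ε) := Icc_subset_Icc le_rfl (by linarith)
  obtain ⟨hθ, hθζ, hθη⟩ := (hζ.mono hsub').piecewise_Icc hη hζT
  refine ⟨_, fun t ht => (hθη ⟨ht.1, by linarith [ht.2]⟩).trans (hηγ ht), ?_, hθ⟩
  exact (((hζU.mono_left hsub').congr hθζ.symm).union (hηU.congr hθη.symm)).mono_left
    Icc_subset_Icc_union_Icc

theorem exists_isIntegralCurveOn_Icc (h : HasUniformIntegralCurvesIn Y U ε) (hε : 0 < ε)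
    {x : E} (hx : x ∈ U) (T : ℝ) :
    ∃ γ : ℝ → E, γ 0 = x ∧ MapsTo γ (Icc (-T) T) U ∧
      IsIntegralCurveOn γ (fun _ => Y) (Icc (-T) T) := by
  suffices ∀ k : ℕ, ∃ γ : ℝ → E, γ 0 = x ∧ MapsTo γ (Icc (-(k * ε)) (k * ε)) U ∧
      IsIntegralCurveOn γ (fun _ => Y) (Icc (-(k * ε)) (k * ε)) by
    obtain ⟨k, hk⟩ := exists_nat_ge (T / ε)
    have hT : Icc (-T) T ⊆ Icc (-(k * ε)) (k * ε) := by
      rw [div_le_iff₀ hε] at hk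
      exact Icc_subset_Icc (by linarith) hk
    obtain ⟨γ, hγ0, hγU, hγ⟩ := this k
    exact ⟨γ, hγ0, hγU.mono_left hT, hγ.mono hT⟩
  intro k
  induction k with
  | zero =>
    obtain ⟨γ, hγ0, hγU, hγ⟩ := h x hx 0
    have hsub : Icc (-((0 : ℕ) * ε)) ((0 : ℕ) * ε) ⊆ Icc (0 - ε) (0 + ε) :=
      Icc_subset_Icc (by simp [hε.le]) (by simp [hε.le])
    exact ⟨γ, hγ0, hγU.mono_left hsub, hγ.mono hsub⟩
  | succ k ih =>
    obtain ⟨γ, hγ0, hγU, hγ⟩ := ih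
    obtain ⟨θ, hθγ, hθU, hθ⟩ := h.exists_extension hε.le (by positivity) hγU hγ
    have hIcc : Icc (-((k + 1 : ℕ) * ε)) ((k + 1 : ℕ) * ε) = Icc (-(k * ε) - ε) (k * ε + ε) := by
      push_cast; congr 1 <;> ring
    refine ⟨θ, ?_, hIcc ▸ hθU, hIcc ▸ hθ⟩
    rw [hθγ ⟨neg_nonpos.mpr (by positivity), by positivity⟩, hγ0]

theorem exists_isIntegralCurve (h : HasUniformIntegralCurvesIn Y U ε) (hε : 0 < ε)
    (hU : IsOpen U) (hY : ContDiffOn ℝ 1 Y U) {x : E} (hx : x ∈ U) :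
    ∃ γ : ℝ → E, γ 0 = x ∧ (∀ t, γ t ∈ U) ∧ IsIntegralCurve γ (fun _ => Y) := by
  choose γ hγ0 hγU hγ using h.exists_isIntegralCurveOn_Icc hε hx
  have hagree {T T' t : ℝ} (hT : |t| < T) (hT' : |t| < T') : γ T t = γ T' t := by
    have hsub {S} (hS : min T T' ≤ S) : Ioo (-min T T') (min T T') ⊆ Icc (-S) S :=
      Ioo_subset_Icc_self.trans (Icc_subset_Icc (neg_le_neg hS) hS)
    have hT := hsub (min_le_left T T')
    have hT' := hsub (min_le_right T T')
    exact isIntegralCurveOn_Ioo_eqOn_of_contDiffOn hU hY (t₀ := 0) (by grind) ((hγ T).mono hT)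
      ((hγU T).mono_left hT) ((hγ T').mono hT') ((hγU T').mono_left hT')
      ((hγ0 T).trans (hγ0 T').symm) (by grind)
  refine ⟨fun t => γ (|t| + 1) t, hγ0 _, fun t => hγU _ (by grind), fun t => ?_⟩
  have hmem : t ∈ Ioo (-(|t| + 1)) (|t| + 1) := by grind
  have hev : (fun s => γ (|s| + 1) s) =ᶠ[𝓝 t] γ (|t| + 1) := by
    filter_upwards [isOpen_Ioo.mem_nhds hmem] with s hs
    exact hagree (by grind) (by grind)
  exact ((hγ _ t (Ioo_subset_Icc_self hmem)).hasDerivAt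
    (Icc_mem_nhds hmem.1 hmem.2)).congr_of_eventuallyEq hev

end HasUniformIntegralCurvesIn

end

theorem exists_isCompleteFlow_of_forall_exists_isIntegralCurve {n : ℕ} {U : Set (Euc n)}
    (hU : IsOpen U) {Y : Euc n → Euc n} (hY : ContDiffOn ℝ 1 Y U)
    (h : ∀ x ∈ U, ∃ γ : ℝ → Euc n, γ 0 = x ∧ (∀ t, γ t ∈ U) ∧ IsIntegralCurve γ (fun _ => Y)) :
    ∃ Φ : ℝ → Euc n → Euc n, IsCompleteFlow Y U Φ := by
  choose! γ hγ0 hγU hγ using h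
  refine ⟨fun t p => γ p t, hγU, hγ0, hγ, fun p hp δ hδ0 hδU hδ t => ?_⟩
  exact isIntegralCurveOn_Ioo_eqOn_of_contDiffOn hU hY (a := -(|t| + 1)) (b := |t| + 1)
    (t₀ := 0) (by grind) (fun s _ => (hδ s).hasDerivWithinAt) (fun s _ => hδU s)
    (fun s _ => (hγ p hp s).hasDerivWithinAt) (fun s _ => hγU p hp s)
    (hδ0.trans (hγ0 p hp).symm) (by grind)

theorem exists_isCompleteFlow_of_norm_le_mul {n : ℕ} {U : Set (Euc n)} (hU : IsOpen U)
    {Y : Euc n → Euc n} (hY : ContDiffOn ℝ 1 Y U) {r : Euc n → ℝ} (hr : LipschitzWith 1 r)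
    (hr0 : ∀ x ∈ U, 0 < r x) (hrU : ∀ x ∈ U, ball x (r x) ⊆ U) {C : ℝ} (hC : 0 < C)
    (hYr : ∀ x ∈ U, ‖Y x‖ ≤ C * r x) :
    ∃ Φ : ℝ → Euc n → Euc n, IsCompleteFlow Y U Φ :=
  exists_isCompleteFlow_of_forall_exists_isIntegralCurve hU hY fun _ hx =>
    (hasUniformIntegralCurvesIn_of_norm_le_mul hY hr hr0 hrU hC hYr).exists_isIntegralCurve
      (by positivity) hU hY hx

/-- For any compact `K ⊆ U` there is a `C^∞` positive function `f` on `U`,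
equal to `1` on `K`, such that the vector field `fX` has a complete flow. -/
theorem exists_smooth_rescaling_complete_flow
    {n : ℕ} (U : Set (Euc n)) (hU : IsOpen U)
    (X : Euc n → Euc n) (l : ℕ∞) (hl : 1 ≤ l) (hX : ContDiffOn ℝ l X U)
    (K : Set (Euc n)) (hK : IsCompact K) (hKU : K ⊆ U) :
    ∃ f : Euc n → ℝ, ContDiffOn ℝ ((⊤ : ℕ∞) : WithTop ℕ∞) f U ∧ (∀ p ∈ U, 0 < f p) ∧ (∀ p ∈ K, f p = 1) ∧
      ∃ Φ : ℝ → Euc n → Euc n, IsCompleteFlow (fun p => f p • X p) U Φ := by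
  obtain ⟨r, hr, hr0, hrU⟩ := hU.exists_lipschitzWith_ball_subset
  obtain ⟨C, hC, f, hf, hf0, hfK, hfX⟩ :=
    hU.exists_contDiffOn_smul_norm_le_mul hX.continuousOn hr.continuous.continuousOn hr0 hK hKU
  have hfX₁ : ContDiffOn ℝ 1 (fun p => f p • X p) U :=
    (hf.of_le (mod_cast le_top)).smul (hX.of_le (mod_cast hl))
  exact ⟨f, hf, hf0, hfK, exists_isCompleteFlow_of_norm_le_mul hU hfX₁ hr hr0 hrU hC hfX⟩
end
end

section
/- Let χ: ℝ² → [0,∞) be a C^l function (l ∈ ℕ ∪ {∞}) with χ(x,y) = 0 if and only if (x,y) = (0,0), and let X: ℝ² → ℝ², X(x,y) = (χ(x,y), 0), having complete flow Φ. Then: (a) the chain recurrent set of X is R_X = {(0,0)}; and (b) every continuous function τ: ℝ² → ℝ that is strictly decreasing along nonconstant orbits of X (in particular, every complete Lyapunov function for X) satisfies τ(x,0) > τ(0,0) for all x < 0 and τ(x,0) < τ(0,0) for all x > 0, and consequently the level set {p ∈ ℝ² : τ(p) = τ((0,0))} is strictly larger than {(0,0)}. -/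
open Set

noncomputable section

/-!
Horizontal lines are invariant and the first coordinate increases strictly along every
nonconstant orbit. For `p ≠ 0` choose `c ≠ 0` strictly between the first coordinates of `p` and
`Φ 1 p`. After time one, orbits starting in the half plane `{x > c}` lie in the closed set
`{x ≥ c + min δ ν}`, where `ν` is the minimum of `χ` on the `δ`-ball around the current point;
since `χ` is positive near the line `x = c`, this closed set lies inside the open half plane, so a
suitable `ε` keeps every chain from `p` inside the half plane and it cannot return to `p`.

On the `x`-axis orbits converge to the origin, forward in time for `x < 0` and backward for
`x > 0`. Hence a function strictly decreasing along orbits exceeds `τ 0` on the negative half axis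
and is below it on the positive one, and since the punctured plane is connected, `τ` takes the
value `τ 0` away from the origin.
-/
open Filter Topology Metric

theorem mul_sub_le_sub_of_hasDerivAt {f f' : ℝ → ℝ} {D : Set ℝ} (hD : Convex ℝ D)
    (hf : ∀ s, HasDerivAt f (f' s) s) {C : ℝ} (hC : ∀ s ∈ D, C ≤ f' s) {a b : ℝ}
    (ha : a ∈ D) (hb : b ∈ D) (hab : a ≤ b) : C * (b - a) ≤ f b - f a :=
  hD.mul_sub_le_image_sub_of_le_deriv (fun s _ => (hf s).continuousAt.continuousWithinAt)
    (fun s _ => (hf s).differentiableAt.differentiableWithinAt)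
    (fun s hs => (hf s).deriv ▸ hC s (interior_subset hs)) a ha b hb hab

theorem tendsto_atTop_zero_of_hasDerivAt {f h : ℝ → ℝ} (hh : Continuous h)
    (hpos : ∀ x < 0, 0 < h x) (hf : ∀ t, HasDerivAt f (h (f t)) t) (hf_ne : ∀ t, f t ≠ 0)
    (hf0 : f 0 < 0) : Tendsto f atTop (𝓝 0) := by
  have hneg : ∀ t, f t < 0 := fun t => not_le.1 fun ht => by
    obtain ⟨s, hs⟩ := intermediate_value_univ 0 t
      (continuous_iff_continuousAt.2 fun s => (hf s).continuousAt) ⟨hf0.le, ht⟩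
    exact hf_ne s hs
  have hmono : Monotone f := monotone_of_deriv_nonneg (fun t => (hf t).differentiableAt)
    fun t => (hf t).deriv ▸ (hpos _ (hneg t)).le
  have hbdd : BddAbove (range f) := ⟨0, forall_mem_range.2 fun t => (hneg t).le⟩
  have hfL : ∀ t, f t ≤ ⨆ t, f t := le_ciSup hbdd
  set L := ⨆ t, f t
  suffices hL : L = 0 from hL ▸ tendsto_atTop_ciSup hmono hbdd
  by_contra hL
  have hLneg : L < 0 := lt_of_le_of_ne (ciSup_le fun t => (hneg t).le) hL
  -- `h` attains a positive minimum on `[f 0, L]`, so `f` would grow at least linearly.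
  obtain ⟨x, hx, hmin⟩ := isCompact_Icc.exists_isMinOn (nonempty_Icc.2 (hfL 0)) hh.continuousOn
  have hμ : 0 < h x := hpos x (hx.2.trans_lt hLneg)
  have hgrowth : ∀ t ≥ 0, h x * (t - 0) ≤ f t - f 0 := fun t ht =>
    mul_sub_le_sub_of_hasDerivAt (convex_Ici 0) hf (fun s hs => hmin ⟨hmono hs, hfL s⟩)
      self_mem_Ici ht ht
  set t := (L - f 0 + 1) / h x
  have := hgrowth t (div_nonneg (by linarith [hfL 0]) hμ.le)
  rw [sub_zero, mul_div_cancel₀ _ hμ.ne'] at this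
  linarith [hfL t]

theorem tendsto_atBot_zero_of_hasDerivAt {f h : ℝ → ℝ} (hh : Continuous h)
    (hpos : ∀ x > 0, 0 < h x) (hf : ∀ t, HasDerivAt f (h (f t)) t) (hf_ne : ∀ t, f t ≠ 0)
    (hf0 : 0 < f 0) : Tendsto f atBot (𝓝 0) := by
  have hreflect : Tendsto (fun t => -f (-t)) atTop (𝓝 0) :=
    tendsto_atTop_zero_of_hasDerivAt (h := fun x => h (-x)) (hh.comp continuous_neg)
      (fun x hx => hpos _ (neg_pos.2 hx))
      (fun t => by
        simpa [Function.comp_def, Pi.neg_def] using ((hf (-t)).comp t (hasDerivAt_neg t)).neg)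
      (fun t => neg_ne_zero.2 (hf_ne _)) (by simpa using hf0)
  simpa using (hreflect.comp tendsto_neg_atBot_atTop).neg

namespace IsCompleteFlow

variable {n : ℕ} {X : Euc n → Euc n} {U : Set (Euc n)} {Φ : ℝ → Euc n → Euc n}

theorem map_add (hΦ : IsCompleteFlow X U Φ) {q : Euc n} (hq : q ∈ U) (s u : ℝ) :
    Φ (s + u) q = Φ s (Φ u q) :=
  hΦ.2.2.2 (Φ u q) (hΦ.1 q hq u) (fun w => Φ (w + u) q) (by simp) (fun _ => hΦ.1 q hq _)
    (fun w => (hΦ.2.2.1 q hq (w + u)).comp_add_const w u) s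

theorem map_eq_self (hΦ : IsCompleteFlow X U Φ) {p : Euc n} (hp : p ∈ U) (hXp : X p = 0)
    (t : ℝ) : Φ t p = p :=
  (hΦ.2.2.2 p hp (fun _ => p) rfl (fun _ => hp)
    (fun s => by simpa [hXp] using hasDerivAt_const s p) t).symm

theorem map_ne (hΦ : IsCompleteFlow X U Φ) {p q : Euc n} (hp : p ∈ U) (hXp : X p = 0)
    (hq : q ∈ U) (hqp : q ≠ p) (t : ℝ) : Φ t q ≠ p := by
  intro h
  apply hqp
  rw [← hΦ.2.1 q hq, ← neg_add_cancel t, hΦ.map_add hq, h, hΦ.map_eq_self hp hXp]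

theorem hasDerivAt_apply (hΦ : IsCompleteFlow X U Φ) {q : Euc n} (hq : q ∈ U) (i : Fin n)
    (t : ℝ) : HasDerivAt (fun s => Φ s q i) (X (Φ t q) i) t := by
  simpa [Function.comp_def] using
    (EuclideanSpace.proj i).hasFDerivAt.comp_hasDerivAt t (hΦ.2.2.1 q hq t)

theorem strictAnti_comp {τ : Euc n → ℝ} (hΦ : IsCompleteFlow X U Φ)
    (hτ : ∀ p, X p ≠ 0 → ∀ t > (0 : ℝ), τ (Φ t p) < τ p) {q : Euc n} (hq : q ∈ U)
    (hXq : ∀ t, X (Φ t q) ≠ 0) : StrictAnti fun t => τ (Φ t q) := by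
  intro s t hst
  have := hτ _ (hXq s) (t - s) (sub_pos.2 hst)
  rwa [← hΦ.map_add hq, sub_add_cancel] at this

theorem mem_chainRecurrentSet (hΦ : IsCompleteFlow X U Φ) {p : Euc n} (hp : p ∈ U)
    (hXp : X p = 0) : p ∈ chainRecurrentSet Φ U := by
  refine ⟨hp, fun T _ ε _ hε => ⟨1, fun _ => p,
    ⟨le_rfl, fun _ _ => hp, fun _ => T, fun _ _ => ⟨le_rfl, ?_⟩⟩, rfl, rfl⟩⟩
  rw [hΦ.map_eq_self hp hXp, sub_self, norm_zero]
  exact (hε p hp).le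

end IsCompleteFlow

theorem notMem_chainRecurrentSet_of_trapping {n : ℕ} {Φ : ℝ → Euc n → Euc n}
    {U A F : Set (Euc n)}
    (hA : IsOpen A) (hF : IsClosed F) (hFA : F ⊆ A) {T : ℝ} (hT : 0 < T)
    (hAF : ∀ x ∈ A, ∀ t ≥ T, Φ t x ∈ F) {p : Euc n} (hpA : p ∉ A)
    (hpF : ∀ t ≥ T, Φ t p ∈ F) : p ∉ chainRecurrentSet Φ U := by
  have hdist_pos : ∀ y ∈ F, 0 < infDist y Aᶜ := fun y hy =>
    (hA.isClosed_compl.notMem_iff_infDist_pos ⟨p, hpA⟩).1 fun h => h (hFA hy)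
  -- On `F` this tolerance is half the distance to `Aᶜ`, so a chain never leaves `A` once inside.
  set ε : Euc n → ℝ := fun y => (infDist y Aᶜ + infDist y F) / 2
  have hε_pos : ∀ y, 0 < ε y := by
    intro y
    by_cases hy : y ∈ F
    · exact half_pos (add_pos_of_pos_of_nonneg (hdist_pos y hy) infDist_nonneg)
    · exact half_pos (add_pos_of_nonneg_of_pos infDist_nonneg
        ((hF.notMem_iff_infDist_pos ⟨_, hpF T le_rfl⟩).1 hy))
  have hjump : ∀ y ∈ F, ∀ z, ‖y - z‖ ≤ ε y → z ∈ A := by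
    intro y hy z hyz
    by_contra hz
    have := infDist_le_dist_of_mem (x := y) (mem_compl hz)
    simp only [ε, infDist_zero_of_mem hy, add_zero] at hyz
    rw [dist_eq_norm] at this
    linarith [hdist_pos y hy]
  rintro ⟨-, hrec⟩
  obtain ⟨m, q, ⟨hm, -, t, ht⟩, hq0, hqm⟩ := hrec T hT ε
    (((continuous_infDist_pt _).add (continuous_infDist_pt _)).div_const 2).continuousOn
    (fun y _ => hε_pos y)
  have hqA : ∀ i < m, q (i + 1) ∈ A := by
    intro i hi
    induction i with
    | zero => exact hjump _ (hq0 ▸ hpF _ (ht 0 hi).1) _ (ht 0 hi).2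
    | succ i ih => exact hjump _ (hAF _ (ih (by omega)) _ (ht _ hi).1) _ (ht _ hi).2
  apply hpA
  rw [← hqm, ← Nat.sub_add_cancel hm]
  exact hqA _ (by omega)

section ClosedBallInf

variable {E : Type*} [NormedAddCommGroup E] [ProperSpace E] {f : E → ℝ} {δ : ℝ}

def closedBallInf (f : E → ℝ) (δ : ℝ) (x : E) : ℝ :=
  sInf ((fun v => f (x + v)) '' closedBall 0 δ)

theorem continuous_closedBallInf (hf : Continuous f) : Continuous (closedBallInf f δ) :=
  (isCompact_closedBall 0 δ).continuous_sInf (by fun_prop)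

theorem closedBallInf_le (hf : Continuous f) {x z : E} (hz : z ∈ closedBall x δ) :
    closedBallInf f δ x ≤ f z := by
  refine csInf_le ((isCompact_closedBall 0 δ).image (by fun_prop)).bddBelow ⟨z - x, ?_, by simp⟩
  simpa [dist_eq_norm] using hz

theorem exists_mem_closedBall_eq_closedBallInf (hf : Continuous f) (hδ : 0 ≤ δ) (x : E) :
    ∃ z ∈ closedBall x δ, f z = closedBallInf f δ x := by
  obtain ⟨v, hv, h⟩ := ((isCompact_closedBall 0 δ).image
    (by fun_prop : Continuous fun v => f (x + v))).sInf_mem ((nonempty_closedBall.2 hδ).image _)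
  exact ⟨x + v, by simpa [dist_eq_norm] using hv, h⟩

end ClosedBallInf

theorem norm_eq_abs_of_apply_one_eq_zero {v : Euc 2} (hv : v 1 = 0) : ‖v‖ = |v 0| := by
  simp [EuclideanSpace.norm_eq, Fin.sum_univ_two, hv, Real.sqrt_sq_eq_abs]

theorem exists_ne_zero_eq_of_le_of_le {E : Type*} [NormedAddCommGroup E] [NormedSpace ℝ E]
    (hE : 1 < Module.rank ℝ E) {τ : E → ℝ} (hτ : Continuous τ) {a b : E} (ha : a ≠ 0)
    (hb : b ≠ 0) (hab : τ a ≤ τ 0) (hba : τ 0 ≤ τ b) : ∃ p ≠ 0, τ p = τ 0 :=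
  (isConnected_compl_singleton_of_one_lt_rank hE 0).isPreconnected.intermediate_value ha hb
    hτ.continuousOn ⟨hab, hba⟩

section PlanarField

variable {χ : Euc 2 → ℝ} {X : Euc 2 → Euc 2} {Φ : ℝ → Euc 2 → Euc 2}
  (hX : ∀ p, X p = (!₂[χ p, 0] : Euc 2)) (hΦ : IsCompleteFlow X univ Φ)

theorem axis_zero : (!₂[0, 0] : Euc 2) = 0 := by
  ext i
  fin_cases i <;> rfl

theorem axis_eq_zero_iff {x : ℝ} : (!₂[x, 0] : Euc 2) = 0 ↔ x = 0 :=
  ⟨fun h => by simpa using congrArg (· 0) h, by rintro rfl; exact axis_zero⟩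

theorem continuous_axis : Continuous fun x : ℝ => (!₂[x, 0] : Euc 2) := by
  fun_prop

theorem pos_apply_axis (hχnonneg : ∀ p, 0 ≤ χ p) (hχzero : ∀ p, χ p = 0 ↔ p = 0) {x : ℝ}
    (hx : x ≠ 0) : 0 < χ !₂[x, 0] :=
  (hχnonneg _).lt_of_ne fun h => hx (axis_eq_zero_iff.1 ((hχzero _).1 h.symm))

include hX

theorem vectorField_eq_zero_iff (hχzero : ∀ p, χ p = 0 ↔ p = 0) {p : Euc 2} :
    X p = 0 ↔ p = 0 := by
  rw [hX, axis_eq_zero_iff, hχzero]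

include hΦ

theorem hasDerivAt_flow_apply_zero (q : Euc 2) (t : ℝ) :
    HasDerivAt (fun s => Φ s q 0) (χ (Φ t q)) t := by
  simpa [hX] using hΦ.hasDerivAt_apply (mem_univ q) 0 t

theorem flow_apply_one (q : Euc 2) (t : ℝ) : Φ t q 1 = q 1 := by
  have hd : ∀ s, HasDerivAt (fun s => Φ s q 1) 0 s := fun s => by
    simpa [hX] using hΦ.hasDerivAt_apply (mem_univ q) 1 s
  simpa [hΦ.2.1 q (mem_univ q)] using
    is_const_of_deriv_eq_zero (fun s => (hd s).differentiableAt) (fun s => (hd s).deriv) t 0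

theorem flow_axis (x t : ℝ) : Φ t !₂[x, 0] = !₂[Φ t !₂[x, 0] 0, 0] := by
  ext i
  fin_cases i
  · rfl
  · simp [flow_apply_one hX hΦ]

theorem flow_ne_zero (hχzero : ∀ p, χ p = 0 ↔ p = 0) {q : Euc 2} (hq : q ≠ 0) (t : ℝ) :
    Φ t q ≠ 0 :=
  hΦ.map_ne (mem_univ 0) ((vectorField_eq_zero_iff hX hχzero).2 rfl) (mem_univ q) hq t

theorem monotone_flow_apply_zero (hχnonneg : ∀ p, 0 ≤ χ p) (q : Euc 2) :
    Monotone fun t => Φ t q 0 :=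
  monotone_of_deriv_nonneg (fun t => (hasDerivAt_flow_apply_zero hX hΦ q t).differentiableAt)
    fun t => (hasDerivAt_flow_apply_zero hX hΦ q t).deriv ▸ hχnonneg _

theorem strictMono_flow_apply_zero (hχnonneg : ∀ p, 0 ≤ χ p) (hχzero : ∀ p, χ p = 0 ↔ p = 0)
    {q : Euc 2} (hq : q ≠ 0) : StrictMono fun t => Φ t q 0 :=
  strictMono_of_deriv_pos fun t => (hasDerivAt_flow_apply_zero hX hΦ q t).deriv ▸
    (hχnonneg _).lt_of_ne fun h => flow_ne_zero hX hΦ hχzero hq t ((hχzero _).1 h.symm)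

/- During the last unit of time the orbit either moves right by `δ`, or it stays `δ`-close to its
endpoint and hence moves at speed at least `closedBallInf χ δ` of that endpoint. -/
theorem flow_apply_zero_add_min_le (hχ : Continuous χ) (hχnonneg : ∀ p, 0 ≤ χ p) (q : Euc 2)
    {t : ℝ} (ht : 1 ≤ t) (δ : ℝ) :
    q 0 + min δ (closedBallInf χ δ (Φ t q)) ≤ Φ t q 0 := by
  have hmono := monotone_flow_apply_zero hX hΦ hχnonneg q
  have hstart : Φ 0 q 0 ≤ Φ (t - 1) q 0 := hmono (by linarith)
  rw [hΦ.2.1 q (mem_univ q)] at hstart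
  rcases le_or_gt δ (Φ t q 0 - Φ (t - 1) q 0) with hjump | hjump
  · linarith [min_le_left δ (closedBallInf χ δ (Φ t q))]
  have hspeed : ∀ s ∈ Icc (t - 1) t, closedBallInf χ δ (Φ t q) ≤ χ (Φ s q) := by
    intro s hs
    refine closedBallInf_le hχ ?_
    rw [mem_closedBall, dist_eq_norm,
      norm_eq_abs_of_apply_one_eq_zero (by simp [flow_apply_one hX hΦ]), abs_le]
    have := hmono hs.1
    have := hmono hs.2
    simp only [PiLp.sub_apply]
    constructor <;> linarith
  have := mul_sub_le_sub_of_hasDerivAt (convex_Icc (t - 1) t)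
    (hasDerivAt_flow_apply_zero hX hΦ q) hspeed (left_mem_Icc.2 (by linarith))
    (right_mem_Icc.2 (by linarith)) (by linarith)
  rw [sub_sub_cancel, mul_one] at this
  linarith [min_le_right δ (closedBallInf χ δ (Φ t q))]

theorem notMem_chainRecurrentSet_of_ne_zero (hχ : Continuous χ) (hχnonneg : ∀ p, 0 ≤ χ p)
    (hχzero : ∀ p, χ p = 0 ↔ p = 0) {p : Euc 2} (hp : p ≠ 0) :
    p ∉ chainRecurrentSet Φ univ := by
  have hab : p 0 < Φ 1 p 0 := by
    simpa [hΦ.2.1 p (mem_univ p)] using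
      strictMono_flow_apply_zero hX hΦ hχnonneg hχzero hp one_pos
  obtain ⟨c, ⟨hac, hcb⟩, hc0 : c ≠ 0⟩ :=
    ((Ioo_infinite hab).sdiff (finite_singleton 0)).nonempty
  set δ := min (|c| / 2) (Φ 1 p 0 - c)
  have hδ : 0 < δ := lt_min (by positivity) (by linarith)
  set g : Euc 2 → ℝ := fun y => min δ (closedBallInf χ δ y)
  have hg_nonneg : ∀ y, 0 ≤ g y := fun y => by
    obtain ⟨z, -, hz⟩ := exists_mem_closedBall_eq_closedBallInf hχ hδ.le y
    exact le_min hδ.le (hz ▸ hχnonneg z)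
  -- `χ` is positive on the `δ`-balls centred on the line `x = c`, which stay away from the origin.
  have hg_pos : ∀ y : Euc 2, y 0 = c → 0 < g y := by
    intro y hy
    obtain ⟨z, hz, hgz⟩ := exists_mem_closedBall_eq_closedBallInf hχ hδ.le y
    refine lt_min hδ (hgz ▸ (hχnonneg z).lt_of_ne fun h => ?_)
    rw [(hχzero z).1 h.symm, mem_closedBall, dist_zero_left] at hz
    have : |c| ≤ ‖y‖ := by simpa [hy] using PiLp.norm_apply_le y 0
    linarith [min_le_left (|c| / 2) (Φ 1 p 0 - c), abs_pos.2 hc0]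
  refine notMem_chainRecurrentSet_of_trapping (A := {y | c < y 0}) (F := {y | c + g y ≤ y 0})
    (isOpen_lt continuous_const (by fun_prop))
    (isClosed_le (continuous_const.add (continuous_const.min (continuous_closedBallInf hχ)))
      (by fun_prop))
    (fun y hy => ?_) one_pos (fun x hx t ht => ?_) (not_lt.2 hac.le) (fun t ht => ?_)
  · have hy : c + g y ≤ y 0 := hy
    rcases ((le_add_of_nonneg_right (hg_nonneg y)).trans hy).lt_or_eq with hyc | hyc
    · exact hyc
    · linarith [hg_pos y hyc.symm]
  · exact (add_le_add_left (le_of_lt (show c < x 0 from hx)) _).trans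
      (flow_apply_zero_add_min_le hX hΦ hχ hχnonneg x ht δ)
  · have := monotone_flow_apply_zero hX hΦ hχnonneg p ht
    show c + g (Φ t p) ≤ Φ t p 0
    linarith [min_le_left δ (closedBallInf χ δ (Φ t p)), min_le_right (|c| / 2) (Φ 1 p 0 - c)]

theorem hasDerivAt_flow_axis (x t : ℝ) :
    HasDerivAt (fun s => Φ s !₂[x, 0] 0) (χ !₂[Φ t !₂[x, 0] 0, 0]) t := by
  simpa only [← flow_axis hX hΦ] using hasDerivAt_flow_apply_zero hX hΦ !₂[x, 0] t

theorem flow_axis_apply_zero_ne_zero (hχzero : ∀ p, χ p = 0 ↔ p = 0) {x : ℝ} (hx : x ≠ 0)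
    (t : ℝ) : Φ t !₂[x, 0] 0 ≠ 0 := fun h =>
  flow_ne_zero hX hΦ hχzero (mt axis_eq_zero_iff.1 hx) t
    (by rw [flow_axis hX hΦ, h, axis_eq_zero_iff])

theorem tendsto_flow_axis_atTop (hχ : Continuous χ) (hχnonneg : ∀ p, 0 ≤ χ p)
    (hχzero : ∀ p, χ p = 0 ↔ p = 0) {x : ℝ} (hx : x < 0) :
    Tendsto (fun t => Φ t !₂[x, 0]) atTop (𝓝 0) := by
  have := tendsto_atTop_zero_of_hasDerivAt (hχ.comp continuous_axis)
    (fun y hy => pos_apply_axis hχnonneg hχzero hy.ne) (hasDerivAt_flow_axis hX hΦ x)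
    (flow_axis_apply_zero_ne_zero hX hΦ hχzero hx.ne) (by simpa [hΦ.2.1] using hx)
  simpa [Function.comp_def, ← flow_axis hX hΦ, axis_zero] using
    (continuous_axis.tendsto 0).comp this

theorem tendsto_flow_axis_atBot (hχ : Continuous χ) (hχnonneg : ∀ p, 0 ≤ χ p)
    (hχzero : ∀ p, χ p = 0 ↔ p = 0) {x : ℝ} (hx : 0 < x) :
    Tendsto (fun t => Φ t !₂[x, 0]) atBot (𝓝 0) := by
  have := tendsto_atBot_zero_of_hasDerivAt (hχ.comp continuous_axis)
    (fun y hy => pos_apply_axis hχnonneg hχzero hy.ne') (hasDerivAt_flow_axis hX hΦ x)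
    (flow_axis_apply_zero_ne_zero hX hΦ hχzero hx.ne') (by simpa [hΦ.2.1] using hx)
  simpa [Function.comp_def, ← flow_axis hX hΦ, axis_zero] using
    (continuous_axis.tendsto 0).comp this

section StrictlyDecreasing

variable (hχ : Continuous χ) (hχnonneg : ∀ p, 0 ≤ χ p) (hχzero : ∀ p, χ p = 0 ↔ p = 0)
  {τ : Euc 2 → ℝ} (hτ : Continuous τ) (hdec : ∀ p, X p ≠ 0 → ∀ t > (0 : ℝ), τ (Φ t p) < τ p)
include hχzero hdec

theorem strictAnti_comp_flow {q : Euc 2} (hq : q ≠ 0) : StrictAnti fun t => τ (Φ t q) :=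
  hΦ.strictAnti_comp hdec (mem_univ q) fun t =>
    (vectorField_eq_zero_iff hX hχzero).not.2 (flow_ne_zero hX hΦ hχzero hq t)

include hχ hχnonneg hτ

theorem lt_apply_axis_of_neg {x : ℝ} (hx : x < 0) : τ 0 < τ !₂[x, 0] := by
  have hanti := strictAnti_comp_flow hX hΦ hχzero hdec (mt axis_eq_zero_iff.1 hx.ne)
  calc τ 0 ≤ τ (Φ 1 !₂[x, 0]) := hanti.antitone.le_of_tendsto
        ((hτ.tendsto 0).comp (tendsto_flow_axis_atTop hX hΦ hχ hχnonneg hχzero hx)) 1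
    _ < τ (Φ 0 !₂[x, 0]) := hanti zero_lt_one
    _ = τ !₂[x, 0] := by rw [hΦ.2.1 _ (mem_univ _)]

theorem apply_axis_lt_of_pos {x : ℝ} (hx : 0 < x) : τ !₂[x, 0] < τ 0 := by
  have hanti := strictAnti_comp_flow hX hΦ hχzero hdec (mt axis_eq_zero_iff.1 hx.ne')
  calc τ !₂[x, 0] = τ (Φ 0 !₂[x, 0]) := by rw [hΦ.2.1 _ (mem_univ _)]
    _ < τ (Φ (-1) !₂[x, 0]) := hanti neg_one_lt_zero
    _ ≤ τ 0 := hanti.antitone.ge_of_tendsto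
        ((hτ.tendsto 0).comp (tendsto_flow_axis_atBot hX hΦ hχ hχnonneg hχzero hx)) (-1)

end StrictlyDecreasing

end PlanarField

theorem chainRecurrentSet_eq_singleton_and_level_set_large_general
    (l : ℕ∞) (χ : Euc 2 → ℝ) (hχ : ContDiff ℝ l χ)
    (hχnonneg : ∀ p, 0 ≤ χ p) (hχzero : ∀ p, χ p = 0 ↔ p = 0)
    (X : Euc 2 → Euc 2) (hX : ∀ p, X p = (!₂[χ p, 0] : Euc 2))
    (Φ : ℝ → Euc 2 → Euc 2) (hΦ : IsCompleteFlow X univ Φ) :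
    chainRecurrentSet Φ univ = {0} ∧
    ∀ τ : Euc 2 → ℝ, Continuous τ →
      (∀ p : Euc 2, X p ≠ 0 → ∀ t > (0:ℝ), τ (Φ t p) < τ p) →
      (∀ x < (0:ℝ), τ 0 < τ (!₂[x, 0] : Euc 2)) ∧
      (∀ x > (0:ℝ), τ (!₂[x, 0] : Euc 2) < τ 0) ∧
      ({0} : Set (Euc 2)) ⊂ {p | τ p = τ 0} := by
  have hχc := hχ.continuous
  refine ⟨subset_antisymm (fun p hp => ?_) (singleton_subset_iff.2 ?_), fun τ hτ hdec => ?_⟩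
  · by_contra hp0
    exact notMem_chainRecurrentSet_of_ne_zero hX hΦ hχc hχnonneg hχzero hp0 hp
  · exact hΦ.mem_chainRecurrentSet (mem_univ 0) ((vectorField_eq_zero_iff hX hχzero).2 rfl)
  have hneg := fun x (hx : x < 0) => lt_apply_axis_of_neg hX hΦ hχc hχnonneg hχzero hτ hdec hx
  have hpos := fun x (hx : 0 < x) => apply_axis_lt_of_pos hX hΦ hχc hχnonneg hχzero hτ hdec hx
  refine ⟨hneg, hpos, (ssubset_iff_of_subset ?_).2 ?_⟩
  · exact singleton_subset_iff.2 (show τ 0 = τ 0 from rfl)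
  obtain ⟨p, hp0, hp⟩ := exists_ne_zero_eq_of_le_of_le
    (by rw [← Module.finrank_eq_rank, finrank_euclideanSpace_fin]; norm_num) hτ
    (mt axis_eq_zero_iff.1 one_ne_zero) (mt axis_eq_zero_iff.1 (neg_ne_zero.2 one_ne_zero))
    (hpos 1 one_pos).le (hneg (-1) neg_one_lt_zero).le
  exact ⟨p, hp, hp0⟩

/-- For `X(x,y) = (χ(x,y), 0)` with `χ ≥ 0` vanishing exactly at the origin,
the chain recurrent set is `{(0,0)}`, and every continuous function strictly decreasing along
nonconstant orbits has `τ(x,0) > τ(0,0)` for `x < 0`, `τ(x,0) < τ(0,0)` for `x > 0`, and its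
level set through the origin strictly contains `{(0,0)}`. -/
theorem chainRecurrentSet_eq_singleton_and_level_set_large
    (l : ℕ∞) (hl : 1 ≤ l) (χ : Euc 2 → ℝ) (hχ : ContDiff ℝ l χ)
    (hχnonneg : ∀ p, 0 ≤ χ p) (hχzero : ∀ p, χ p = 0 ↔ p = 0)
    (X : Euc 2 → Euc 2) (hX : ∀ p, X p = (!₂[χ p, 0] : Euc 2))
    (Φ : ℝ → Euc 2 → Euc 2) (hΦ : IsCompleteFlow X univ Φ) :
    chainRecurrentSet Φ univ = {0} ∧
    ∀ τ : Euc 2 → ℝ, Continuous τ →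
      (∀ p : Euc 2, X p ≠ 0 → ∀ t > (0:ℝ), τ (Φ t p) < τ p) →
      (∀ x < (0:ℝ), τ 0 < τ (!₂[x, 0] : Euc 2)) ∧
      (∀ x > (0:ℝ), τ (!₂[x, 0] : Euc 2) < τ 0) ∧
      ({0} : Set (Euc 2)) ⊂ {p | τ p = τ 0} :=
  chainRecurrentSet_eq_singleton_and_level_set_large_general l χ hχ hχnonneg hχzero X hX Φ hΦ
end
end

section
/- Let l ∈ ℕ, let χ: ℝ → (0,∞) be C^l, and let X: ℝ² → ℝ², X(x,y) = (χ(y), 0), whose flow is Φ_t(x,y) = (x + tχ(y), y). Let K = [0,1] × [0,1] and suppose τ: ℝ² → ℝ is a C^l function with ∇τ(p)·X(p) = −1 for all p ∈ K. If τ is of class C^{l+1} on some nonempty open set V contained in the interior of K, then there exists a nonempty open interval I ⊆ ℝ on which χ is of class C^{l+1}. In particular, if χ is nowhere C^{l+1}, then τ is not C^{l+1} on any nonempty open subset of K. -/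
open Set

/-!
On each horizontal segment `[x₀, x₁] × {y}` inside `K` the relation `∇τ · X = -1` integrates to
`χ y * (τ (x₀, y) - τ (x₁, y)) = x₁ - x₀`, so on a rectangle inside `V` the function `χ` is a
constant divided by a difference of two horizontal slices of `τ`. Both slices are `C^{l+1}` where
`τ` is, and the quotient is well defined since the relation also forces `χ ≠ 0`.
-/

theorem sub_eq_of_fderiv_apply_eq_const {E F : Type*} [NormedAddCommGroup E] [NormedSpace ℝ E]
    [NormedAddCommGroup F] [NormedSpace ℝ F] [CompleteSpace F] {f : E → F} {p v : E}
    {a b : ℝ} {c : F} (hf : ∀ s ∈ uIcc a b, DifferentiableAt ℝ f (p + s • v))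
    (hc : ∀ s ∈ uIcc a b, fderiv ℝ f (p + s • v) v = c) :
    f (p + b • v) - f (p + a • v) = (b - a) • c := by
  have hline : ∀ s ∈ uIcc a b, HasDerivAt (fun s : ℝ ↦ f (p + s • v)) c s := by
    intro s hs
    have hmove : HasDerivAt (fun s : ℝ ↦ p + s • v) v s := by
      simpa using ((hasDerivAt_id s).smul_const v).const_add p
    have hchain := (hf s hs).hasFDerivAt.comp_hasDerivAt s hmove
    rwa [hc s hs] at hchain
  rw [← intervalIntegral.integral_eq_sub_of_hasDerivAt hline intervalIntegrable_const,
    intervalIntegral.integral_const]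

theorem mul_sub_eq_of_fderiv_apply_eq_neg_one {τ : ℝ × ℝ → ℝ} {c x₀ x₁ y : ℝ}
    (hτ : ∀ x ∈ uIcc x₀ x₁, DifferentiableAt ℝ τ (x, y))
    (horbital : ∀ x ∈ uIcc x₀ x₁, fderiv ℝ τ (x, y) (c, 0) = -1) :
    c * (τ (x₀, y) - τ (x₁, y)) = x₁ - x₀ := by
  have hc : c ≠ 0 := by
    rintro rfl
    have hzero := horbital x₀ left_mem_uIcc
    rw [Prod.mk_zero_zero, map_zero] at hzero
    norm_num at hzero
  have hslope : ∀ x ∈ uIcc x₀ x₁, fderiv ℝ τ ((0, y) + x • (1, 0)) (1, 0) = -c⁻¹ := by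
    intro x hx
    have hlin : c • fderiv ℝ τ (x, y) (1, 0) = -1 := by
      rw [← map_smul, Prod.smul_mk, smul_eq_mul, mul_one, smul_zero, horbital x hx]
    simp only [Prod.smul_mk, smul_eq_mul, mul_one, mul_zero, Prod.mk_add_mk, zero_add, add_zero]
    field_simp
    simpa [smul_eq_mul, mul_comm] using hlin
  have hsub := sub_eq_of_fderiv_apply_eq_const (p := ((0 : ℝ), y)) (v := ((1 : ℝ), (0 : ℝ)))
    (by simpa using hτ) hslope
  simp only [Prod.smul_mk, smul_eq_mul, mul_one, mul_zero, Prod.mk_add_mk, zero_add,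
    add_zero] at hsub
  rw [← neg_sub, hsub]
  field_simp

theorem ContDiffOn.of_mul_eq_const {𝕜 E : Type*} [NontriviallyNormedField 𝕜]
    [NormedAddCommGroup E] [NormedSpace 𝕜 E] {f g : E → 𝕜} {s : Set E} {n : WithTop ℕ∞} {d : 𝕜}
    (hg : ContDiffOn 𝕜 n g s) (hd : d ≠ 0) (hfg : ∀ x ∈ s, f x * g x = d) :
    ContDiffOn 𝕜 n f s := by
  have hg₀ : ∀ x ∈ s, g x ≠ 0 := fun x hx h ↦ hd (by rw [← hfg x hx, h, mul_zero])
  refine ((contDiffOn_const (c := d)).div hg hg₀).congr fun x hx ↦ ?_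
  rw [Pi.div_apply, ← hfg x hx, mul_div_cancel_right₀ _ (hg₀ x hx)]

theorem IsOpen.exists_Icc_prod_Ioo_subset {V : Set (ℝ × ℝ)} (hV : IsOpen V) (hne : V.Nonempty) :
    ∃ x₀ x₁ a b : ℝ, x₀ < x₁ ∧ a < b ∧ Icc x₀ x₁ ×ˢ Ioo a b ⊆ V := by
  obtain ⟨p, hp⟩ := hne
  obtain ⟨u, w, hu, hw, hpu, hpw, huw⟩ := isOpen_prod_iff.1 hV p.1 p.2 hp
  obtain ⟨ε, hε, hball⟩ := Metric.isOpen_iff.1 hu p.1 hpu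
  obtain ⟨a, b, hab, hIoo⟩ := hw.exists_Ioo_subset ⟨p.2, hpw⟩
  have hIcc : Icc (p.1 - ε / 2) (p.1 + ε / 2) ⊆ u := by
    rw [← Real.closedBall_eq_Icc]
    exact (Metric.closedBall_subset_ball (half_lt_self hε)).trans hball
  exact ⟨_, _, a, b, by linarith, hab, (prod_mono hIcc hIoo).trans huw⟩

theorem regularity_of_prescribed_orbital_derivative_general
    (l : ℕ) (χ : ℝ → ℝ)
    (τ : ℝ × ℝ → ℝ)
    (hderiv : ∀ p ∈ Icc (0:ℝ) 1 ×ˢ Icc (0:ℝ) 1, fderiv ℝ τ p (χ p.2, 0) = -1) :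
    ∀ V : Set (ℝ × ℝ), IsOpen V → V.Nonempty →
      V ⊆ interior (Icc (0:ℝ) 1 ×ˢ Icc (0:ℝ) 1) →
      ContDiffOn ℝ ((l + 1 : ℕ) : ℕ∞) τ V →
      ∃ a b : ℝ, a < b ∧ ContDiffOn ℝ ((l + 1 : ℕ) : ℕ∞) χ (Ioo a b) := by
  intro V hV hne hVK hτV
  obtain ⟨x₀, x₁, a, b, hx₀₁, hab, hrect⟩ := hV.exists_Icc_prod_Ioo_subset hne
  have hmem : ∀ x ∈ uIcc x₀ x₁, ∀ y ∈ Ioo a b, (x, y) ∈ V := fun x hx y hy ↦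
    hrect ⟨by rwa [uIcc_of_le hx₀₁.le] at hx, hy⟩
  have hτ : DifferentiableOn ℝ τ V := hτV.differentiableOn (by simp)
  have hslice : ∀ x ∈ uIcc x₀ x₁,
      ContDiffOn ℝ ((l + 1 : ℕ) : ℕ∞) (fun y ↦ τ (x, y)) (Ioo a b) := fun x hx ↦
    hτV.comp (contDiff_const.prodMk contDiff_id).contDiffOn fun y hy ↦ hmem x hx y hy
  refine ⟨a, b, hab, ((hslice x₀ left_mem_uIcc).sub (hslice x₁ right_mem_uIcc)).of_mul_eq_const
    (sub_ne_zero.2 hx₀₁.ne') fun y hy ↦ mul_sub_eq_of_fderiv_apply_eq_neg_one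
      (fun x hx ↦ hτ.differentiableAt (hV.mem_nhds (hmem x hx y hy)))
      (fun x hx ↦ hderiv (x, y) (interior_subset (hVK (hmem x hx y hy))))⟩

/-- Remark on optimal regularity. For `X(x,y) = (χ(y), 0)` with `χ > 0` of
class `C^l`, if a `C^l` function `τ` has orbital derivative `∇τ·X ≡ -1` on `K = [0,1]²` and is
`C^{l+1}` on a nonempty open subset of the interior of `K`, then `χ` is `C^{l+1}` on some
nonempty open interval. In particular, if `χ` is nowhere `C^{l+1}`, then `τ` is not `C^{l+1}`
on any nonempty open subset of `K`. -/
theorem regularity_of_prescribed_orbital_derivative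
    (l : ℕ) (hl : 1 ≤ l) (χ : ℝ → ℝ) (hχ : ContDiff ℝ (l : ℕ∞) χ)
    (hχpos : ∀ y, 0 < χ y)
    (τ : ℝ × ℝ → ℝ) (hτ : ContDiff ℝ (l : ℕ∞) τ)
    (hderiv : ∀ p ∈ Icc (0:ℝ) 1 ×ˢ Icc (0:ℝ) 1, fderiv ℝ τ p (χ p.2, 0) = -1) :
    ∀ V : Set (ℝ × ℝ), IsOpen V → V.Nonempty →
      V ⊆ interior (Icc (0:ℝ) 1 ×ˢ Icc (0:ℝ) 1) →
      ContDiffOn ℝ ((l + 1 : ℕ) : ℕ∞) τ V →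
      ∃ a b : ℝ, a < b ∧ ContDiffOn ℝ ((l + 1 : ℕ) : ℕ∞) χ (Ioo a b) :=
  regularity_of_prescribed_orbital_derivative_general l χ τ hderiv
end

section
/- Let k ∈ ℕ, n ≥ 1, W ⊆ ℝ^{n−1} with closure W̄, and let τ: [−(k+1), k+1] × W̄ → ℝ be a C^l function (l ∈ ℕ ∪ {∞}) with ∂_t τ(t,q) < 0 for all (t,q). Let μ: ℝ → [0,1] be a smooth nondecreasing function with μ ≡ 0 on (−∞, −3/2] and μ ≡ 1 on [−5/4, ∞). Define τ₁(t,q) := (1 − μ(t))τ(t,q) + μ(t)[τ(−1,q) − (t + 3/2)]. Then τ₁ is C^l, ∂_t τ₁(t,q) < 0 for all (t,q) ∈ [−(k+1), k+1] × W̄, ∂_t τ₁ ≡ −1 on [−5/4, k+1] × W̄, and τ₁ = τ on [−(k+1), −3/2] × W̄. -/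
open Set

/-!
Write `τ₁ = τ + μ (g - τ)` with `g t = τ(-1,q) - (t + 3/2)`, so that
`∂_t τ₁ = (1 - μ) ∂_t τ + μ ∂_t g + μ' (g - τ)`. The first two terms form a convex combination
of negative numbers. The last vanishes outside `(-3/2, -5/4)`, where `μ` is constant, and inside
that interval `t < -1` gives `τ(-1,q) < τ(t,q)` while `t + 3/2 > 0`, so `g - τ < 0` and `μ' ≥ 0`.
-/

lemma strictAntiOn_Icc_of_hasDerivWithinAt_neg {f : ℝ → ℝ} {a b : ℝ}
    (hf : ∀ t ∈ Icc a b, ∃ d < 0, HasDerivWithinAt f d (Icc a b) t) :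
    StrictAntiOn f (Icc a b) := by
  refine strictAntiOn_of_deriv_neg (convex_Icc a b)
    (fun t ht => (hf t ht).choose_spec.2.continuousWithinAt) fun t ht => ?_
  rw [interior_Icc] at ht
  obtain ⟨d, hd, hfd⟩ := hf t (Ioo_subset_Icc_self ht)
  rwa [(hfd.hasDerivAt (Icc_mem_nhds ht.1 ht.2)).deriv]

lemma HasDerivWithinAt.interpolate {μ f g : ℝ → ℝ} {m d e t : ℝ} {s : Set ℝ}
    (hμ : HasDerivAt μ m t) (hf : HasDerivWithinAt f d s t) (hg : HasDerivWithinAt g e s t) :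
    HasDerivWithinAt (fun x => (1 - μ x) * f x + μ x * g x)
      ((1 - μ t) * d + μ t * e + m * (g t - f t)) s t :=
  (((hμ.hasDerivWithinAt.const_sub 1).mul hf).add (hμ.hasDerivWithinAt.mul hg)).congr_deriv
    (by ring)

lemma deriv_eq_zero_of_notMem_Ioo {μ : ℝ → ℝ} {a b t : ℝ} (hμ01 : ∀ t, μ t ∈ Icc (0:ℝ) 1)
    (hμ0 : ∀ t ≤ a, μ t = 0) (hμ1 : ∀ t, b ≤ t → μ t = 1) (ht : t ∉ Ioo a b) :
    deriv μ t = 0 := by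
  rcases le_or_gt t a with hta | hat
  · exact IsLocalMin.deriv_eq_zero <| .of_forall fun s => hμ0 t hta ▸ (hμ01 s).1
  · have htb : b ≤ t := not_lt.mp fun htb => ht ⟨hat, htb⟩
    exact IsLocalMax.deriv_eq_zero <| .of_forall fun s => hμ1 t htb ▸ (hμ01 s).2

section CutoffInterpolation

variable {μ f : ℝ → ℝ} {a b : ℝ}

lemma hasDerivWithinAt_cutoff_interpolation {s : Set ℝ} {t d : ℝ} (hμ : Differentiable ℝ μ)
    (hf : HasDerivWithinAt f d s t) :
    HasDerivWithinAt (fun x => (1 - μ x) * f x + μ x * (f (-1) - (x + 3/2)))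
      ((1 - μ t) * d + μ t * (-1) + deriv μ t * (f (-1) - (t + 3/2) - f t)) s t :=
  .interpolate (hμ t).hasDerivAt hf (((hasDerivAt_id t).add_const (3/2 : ℝ)).const_sub
    (f (-1))).hasDerivWithinAt

lemma exists_neg_hasDerivWithinAt_cutoff_interpolation (hμ : Differentiable ℝ μ)
    (hμmono : Monotone μ) (hμ01 : ∀ t, μ t ∈ Icc (0:ℝ) 1)
    (hμ0 : ∀ t ≤ (-3/2 : ℝ), μ t = 0) (hμ1 : ∀ t, (-5/4 : ℝ) ≤ t → μ t = 1)
    (hab : (-1 : ℝ) ∈ Icc a b) (hf : ∀ t ∈ Icc a b, ∃ d < 0, HasDerivWithinAt f d (Icc a b) t)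
    {t : ℝ} (ht : t ∈ Icc a b) :
    ∃ d < (0:ℝ), HasDerivWithinAt (fun s => (1 - μ s) * f s + μ s * (f (-1) - (s + 3/2)))
      d (Icc a b) t := by
  obtain ⟨d, hd, hfd⟩ := hf t ht
  refine ⟨_, ?_, hasDerivWithinAt_cutoff_interpolation hμ hfd⟩
  have hslope : deriv μ t * (f (-1) - (t + 3/2) - f t) ≤ 0 := by
    by_cases hmid : t ∈ Ioo (-3/2 : ℝ) (-5/4)
    · have hdrop : f (-1) < f t :=
        strictAntiOn_Icc_of_hasDerivWithinAt_neg hf ht hab (by linarith [hmid.2])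
      exact mul_nonpos_of_nonneg_of_nonpos hμmono.deriv_nonneg (by linarith [hmid.1])
    · rw [deriv_eq_zero_of_notMem_Ioo hμ01 hμ0 hμ1 hmid, zero_mul]
  have hconvex : (1 - μ t) * d + μ t * (-1) < 0 :=
    convex_Iio (0 : ℝ) hd (mem_Iio.mpr neg_one_lt_zero) (sub_nonneg.mpr (hμ01 t).2) (hμ01 t).1
      (by ring)
  linarith

lemma hasDerivWithinAt_cutoff_interpolation_eq_neg_one (hμ : Differentiable ℝ μ)
    (hμle : ∀ t, μ t ≤ 1) (hμ1 : ∀ t, (-5/4 : ℝ) ≤ t → μ t = 1)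
    (hf : DifferentiableOn ℝ f (Icc a b)) {t : ℝ} (ht : (-5/4 : ℝ) ≤ t) :
    HasDerivWithinAt (fun s => (1 - μ s) * f s + μ s * (f (-1) - (s + 3/2))) (-1)
      (Icc a b) t := by
  by_cases htS : t ∈ Icc a b
  · have hμ' : deriv μ t = 0 :=
      IsLocalMax.deriv_eq_zero <| .of_forall fun s => hμ1 t ht ▸ hμle s
    convert hasDerivWithinAt_cutoff_interpolation hμ (hf t htS).hasDerivWithinAt using 1
    rw [hμ1 t ht, hμ']
    ring
  · rw [← isClosed_Icc.closure_eq] at htS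
    exact hasDerivWithinAt_iff_hasFDerivWithinAt.mpr (.of_notMem_closure htS)

end CutoffInterpolation

lemma ContDiffOn.cutoff_interpolation {E : Type*} [NormedAddCommGroup E] [NormedSpace ℝ E]
    {n : WithTop ℕ∞} {μ : ℝ → ℝ} {τ : ℝ × E → ℝ} {S : Set ℝ} {U : Set E}
    (hτ : ContDiffOn ℝ n τ (S ×ˢ U)) (hμ : ContDiff ℝ n μ) (hS : (-1 : ℝ) ∈ S) :
    ContDiffOn ℝ n (fun p => (1 - μ p.1) * τ p + μ p.1 * (τ (-1, p.2) - (p.1 + 3/2)))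
      (S ×ˢ U) := by
  have hμ₁ : ContDiffOn ℝ n (fun p : ℝ × E => μ p.1) (S ×ˢ U) :=
    (hμ.comp contDiff_fst).contDiffOn
  have hτ_left : ContDiffOn ℝ n (fun p : ℝ × E => τ (-1, p.2)) (S ×ˢ U) :=
    hτ.comp (contDiff_const.prodMk contDiff_snd).contDiffOn fun p hp => ⟨hS, hp.2⟩
  exact ((contDiffOn_const.sub hμ₁).mul hτ).add
    (hμ₁.mul (hτ_left.sub (contDiffOn_fst.add contDiffOn_const)))

theorem first_step_interpolation_general
    (n : ℕ) (k : ℕ) (l : ℕ∞)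
    (W : Set (EuclideanSpace ℝ (Fin (n - 1))))
    (τ : ℝ × EuclideanSpace ℝ (Fin (n - 1)) → ℝ)
    (hτ : ContDiffOn ℝ l τ (Icc (-((k:ℝ)+1)) ((k:ℝ)+1) ×ˢ closure W))
    (hτd : ∀ q ∈ closure W, ∀ t ∈ Icc (-((k:ℝ)+1)) ((k:ℝ)+1),
      ∃ d < (0:ℝ), HasDerivWithinAt (fun s => τ (s, q)) d (Icc (-((k:ℝ)+1)) ((k:ℝ)+1)) t)
    (μ : ℝ → ℝ) (hμ : ContDiff ℝ ((⊤ : ℕ∞) : WithTop ℕ∞) μ) (hμmono : Monotone μ)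
    (hμ01 : ∀ t, μ t ∈ Icc (0:ℝ) 1)
    (hμ0 : ∀ t ≤ (-3/2 : ℝ), μ t = 0) (hμ1 : ∀ t, (-5/4 : ℝ) ≤ t → μ t = 1) :
    ContDiffOn ℝ l
      (fun p => (1 - μ p.1) * τ p + μ p.1 * (τ (-1, p.2) - (p.1 + 3/2)))
      (Icc (-((k:ℝ)+1)) ((k:ℝ)+1) ×ˢ closure W) ∧
    (∀ q ∈ closure W, ∀ t ∈ Icc (-((k:ℝ)+1)) ((k:ℝ)+1),
      ∃ d < (0:ℝ), HasDerivWithinAt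
        (fun s => (1 - μ s) * τ (s, q) + μ s * (τ (-1, q) - (s + 3/2))) d
        (Icc (-((k:ℝ)+1)) ((k:ℝ)+1)) t) ∧
    (∀ q ∈ closure W, ∀ t ∈ Icc (-5/4 : ℝ) ((k:ℝ)+1),
      HasDerivWithinAt
        (fun s => (1 - μ s) * τ (s, q) + μ s * (τ (-1, q) - (s + 3/2))) (-1)
        (Icc (-((k:ℝ)+1)) ((k:ℝ)+1)) t) ∧
    ∀ p ∈ Icc (-((k:ℝ)+1)) (-3/2 : ℝ) ×ˢ closure W,
      (1 - μ p.1) * τ p + μ p.1 * (τ (-1, p.2) - (p.1 + 3/2)) = τ p := by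
  have hμd : Differentiable ℝ μ := hμ.differentiable (by simp)
  have hk : (0 : ℝ) ≤ k := k.cast_nonneg
  have hS : (-1 : ℝ) ∈ Icc (-((k:ℝ)+1)) ((k:ℝ)+1) := ⟨by linarith, by linarith⟩
  refine ⟨hτ.cutoff_interpolation (hμ.of_le (by exact_mod_cast le_top)) hS,
    fun q hq t ht => ?_, fun q hq t ht => ?_, fun p hp => ?_⟩
  · exact exists_neg_hasDerivWithinAt_cutoff_interpolation (f := fun s => τ (s, q))
      hμd hμmono hμ01 hμ0 hμ1 hS (hτd q hq) ht
  · exact hasDerivWithinAt_cutoff_interpolation_eq_neg_one (f := fun s => τ (s, q))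
      hμd (fun s => (hμ01 s).2) hμ1
      (fun s hs => (hτd q hq s hs).choose_spec.2.differentiableWithinAt) ht.1
  · rw [hμ0 p.1 hp.1.2]
    ring

/-- first step of the Lemma. Interpolating `τ` with the affine function
`τ(-1,q) - (t + 3/2)` via the cutoff `μ` produces a `C^l` function `τ₁` that is strictly
decreasing in `t`, has `∂_t τ₁ ≡ -1` on `[-5/4, k+1] × W̄`, and agrees with `τ` on
`[-(k+1), -3/2] × W̄`. -/
theorem first_step_interpolation
    (n : ℕ) (hn : 1 ≤ n) (k : ℕ) (l : ℕ∞)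
    (W : Set (EuclideanSpace ℝ (Fin (n - 1))))
    (τ : ℝ × EuclideanSpace ℝ (Fin (n - 1)) → ℝ)
    (hτ : ContDiffOn ℝ l τ (Icc (-((k:ℝ)+1)) ((k:ℝ)+1) ×ˢ closure W))
    (hτd : ∀ q ∈ closure W, ∀ t ∈ Icc (-((k:ℝ)+1)) ((k:ℝ)+1),
      ∃ d < (0:ℝ), HasDerivWithinAt (fun s => τ (s, q)) d (Icc (-((k:ℝ)+1)) ((k:ℝ)+1)) t)
    (μ : ℝ → ℝ) (hμ : ContDiff ℝ ((⊤ : ℕ∞) : WithTop ℕ∞) μ) (hμmono : Monotone μ)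
    (hμ01 : ∀ t, μ t ∈ Icc (0:ℝ) 1)
    (hμ0 : ∀ t ≤ (-3/2 : ℝ), μ t = 0) (hμ1 : ∀ t, (-5/4 : ℝ) ≤ t → μ t = 1) :
    ContDiffOn ℝ l
      (fun p => (1 - μ p.1) * τ p + μ p.1 * (τ (-1, p.2) - (p.1 + 3/2)))
      (Icc (-((k:ℝ)+1)) ((k:ℝ)+1) ×ˢ closure W) ∧
    (∀ q ∈ closure W, ∀ t ∈ Icc (-((k:ℝ)+1)) ((k:ℝ)+1),
      ∃ d < (0:ℝ), HasDerivWithinAt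
        (fun s => (1 - μ s) * τ (s, q) + μ s * (τ (-1, q) - (s + 3/2))) d
        (Icc (-((k:ℝ)+1)) ((k:ℝ)+1)) t) ∧
    (∀ q ∈ closure W, ∀ t ∈ Icc (-5/4 : ℝ) ((k:ℝ)+1),
      HasDerivWithinAt
        (fun s => (1 - μ s) * τ (s, q) + μ s * (τ (-1, q) - (s + 3/2))) (-1)
        (Icc (-((k:ℝ)+1)) ((k:ℝ)+1)) t) ∧
    ∀ p ∈ Icc (-((k:ℝ)+1)) (-3/2 : ℝ) ×ˢ closure W,
      (1 - μ p.1) * τ p + μ p.1 * (τ (-1, p.2) - (p.1 + 3/2)) = τ p :=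
  first_step_interpolation_general n k l W τ hτ hτd μ hμ hμmono hμ01 hμ0 hμ1
end

section
/- Let W ⊆ ℝ^m be open, φ: W → ℝ a C^l function (l ∈ ℕ ∪ {∞}), a < b real numbers with φ(W) ⊆ (a,b), and τ: (a,b) × W → ℝ a C^l function such that τ(u,q) = τ(φ(q), q) − u + φ(q) for all (u,q) in some open neighborhood of the graph {(φ(q), q) : q ∈ W}. Define σ: (a,b) × W → ℝ by σ(u,q) := τ(u,q) for u ≤ φ(q) and σ(u,q) := τ(φ(q), q) − u + φ(q) for u ≥ φ(q). Then σ is well defined and C^l, ∂_u σ ≡ −1 on {(u,q) : u ≥ φ(q)}, and if ∂_u τ < 0 everywhere then ∂_u σ < 0 everywhere. -/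
/-!
Near the graph of `φ` the function `τ` already is the affine extension, so there both branches
of `σ` agree with a single `C^l` function. Away from the graph each point has a neighbourhood on
one side of it, where `σ` is `τ` or the affine extension. Hence `σ` is locally one of two `C^l`
functions, and its `u`-derivative is that of the branch it locally equals.
-/

open Set Filter Topology

noncomputable section

variable {E : Type*}

def affineExtension (φ : E → ℝ) (τ : ℝ × E → ℝ) (p : ℝ × E) : ℝ :=
  τ (φ p.2, p.2) - p.1 + φ p.2

/-- The function `σ` of the statement. -/
def piecewiseExtension (φ : E → ℝ) (τ : ℝ × E → ℝ) (p : ℝ × E) : ℝ :=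
  if p.1 ≤ φ p.2 then τ p else affineExtension φ τ p

variable {φ : E → ℝ} {τ : ℝ × E → ℝ}

theorem affineExtension_apply_graph (φ : E → ℝ) (τ : ℝ × E → ℝ) (q : E) :
    affineExtension φ τ (φ q, q) = τ (φ q, q) := by
  simp [affineExtension]

theorem piecewiseExtension_of_le_fst {p : ℝ × E} (h : φ p.2 ≤ p.1) :
    piecewiseExtension φ τ p = affineExtension φ τ p := by
  rcases h.eq_or_lt with heq | hlt
  · rw [show p = (φ p.2, p.2) from Prod.ext heq.symm rfl]
    exact (if_pos le_rfl).trans (affineExtension_apply_graph φ τ p.2).symm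
  · exact if_neg hlt.not_ge

theorem hasDerivAt_affineExtension_fst (φ : E → ℝ) (τ : ℝ × E → ℝ) (q : E) (u : ℝ) :
    HasDerivAt (fun s => affineExtension φ τ (s, q)) (-1) u := by
  simpa [affineExtension] using ((hasDerivAt_id u).const_sub (τ (φ q, q))).add_const (φ q)

section Topology

variable [TopologicalSpace E]

theorem piecewiseExtension_eventuallyEq_of_fst_lt {p : ℝ × E} (hφ : ContinuousAt φ p.2)
    (h : p.1 < φ p.2) : piecewiseExtension φ τ =ᶠ[𝓝 p] τ := by
  have hlt : ∀ᶠ x : ℝ × E in 𝓝 p, x.1 < φ x.2 :=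
    continuous_fst.continuousAt.eventually_lt (hφ.comp continuous_snd.continuousAt) h
  filter_upwards [hlt] with x hx
  exact if_pos hx.le

theorem piecewiseExtension_eventuallyEq_of_le_fst {p : ℝ × E} (hφ : ContinuousAt φ p.2)
    (hτ : τ =ᶠ[𝓝 (φ p.2, p.2)] affineExtension φ τ) (h : φ p.2 ≤ p.1) :
    piecewiseExtension φ τ =ᶠ[𝓝 p] affineExtension φ τ := by
  rcases h.eq_or_lt with heq | hlt
  · have hp : p = (φ p.2, p.2) := Prod.ext heq.symm rfl
    rw [hp]
    filter_upwards [hτ] with x hx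
    by_cases hx₁ : x.1 ≤ φ x.2
    · exact (if_pos hx₁).trans hx
    · exact if_neg hx₁
  · have hgt : ∀ᶠ x : ℝ × E in 𝓝 p, φ x.2 < x.1 :=
      (hφ.comp continuous_snd.continuousAt).eventually_lt continuous_fst.continuousAt hlt
    filter_upwards [hgt] with x hx
    exact if_neg hx.not_ge

theorem hasDerivAt_piecewiseExtension_fst_of_le {q : E} {u : ℝ} (hφ : ContinuousAt φ q)
    (hτ : τ =ᶠ[𝓝 (φ q, q)] affineExtension φ τ) (h : φ q ≤ u) :
    HasDerivAt (fun s => piecewiseExtension φ τ (s, q)) (-1) u :=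
  (hasDerivAt_affineExtension_fst φ τ q u).congr_of_eventuallyEq <|
    (piecewiseExtension_eventuallyEq_of_le_fst (p := (u, q)) hφ hτ h).comp_tendsto
      ((Continuous.prodMk_left q).tendsto u)

theorem hasDerivAt_piecewiseExtension_fst_of_lt {q : E} {u d : ℝ} (hφ : ContinuousAt φ q)
    (h : u < φ q) (hτ : HasDerivAt (fun s => τ (s, q)) d u) :
    HasDerivAt (fun s => piecewiseExtension φ τ (s, q)) d u :=
  hτ.congr_of_eventuallyEq <|
    (piecewiseExtension_eventuallyEq_of_fst_lt (p := (u, q)) hφ h).comp_tendsto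
      ((Continuous.prodMk_left q).tendsto u)

end Topology

section Normed

variable [NormedAddCommGroup E] [NormedSpace ℝ E] {l : WithTop ℕ∞} {I : Set ℝ} {W : Set E}

theorem ContDiffOn.affineExtension (hφ : ContDiffOn ℝ l φ W) (hφI : MapsTo φ W I)
    (hτ : ContDiffOn ℝ l τ (I ×ˢ W)) :
    ContDiffOn ℝ l (affineExtension φ τ) (I ×ˢ W) := by
  have hφ₂ : ContDiffOn ℝ l (fun p : ℝ × E => φ p.2) (I ×ˢ W) :=
    hφ.comp contDiff_snd.contDiffOn fun p hp => hp.2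
  have hτ_graph : ContDiffOn ℝ l (fun p : ℝ × E => τ (φ p.2, p.2)) (I ×ˢ W) :=
    hτ.comp (hφ₂.prodMk contDiff_snd.contDiffOn) fun p hp => ⟨hφI hp.2, hp.2⟩
  exact (hτ_graph.sub contDiff_fst.contDiffOn).add hφ₂

theorem contDiffOn_piecewiseExtension (hI : IsOpen I) (hW : IsOpen W)
    (hφ : ContDiffOn ℝ l φ W) (hφI : MapsTo φ W I) (hτ : ContDiffOn ℝ l τ (I ×ˢ W))
    (hτ_graph : ∀ q ∈ W, τ =ᶠ[𝓝 (φ q, q)] affineExtension φ τ) :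
    ContDiffOn ℝ l (piecewiseExtension φ τ) (I ×ˢ W) := by
  have hS : IsOpen (I ×ˢ W) := hI.prod hW
  intro p hp
  have hφp : ContinuousAt φ p.2 := hφ.continuousOn.continuousAt (hW.mem_nhds hp.2)
  refine ContDiffAt.contDiffWithinAt ?_
  rcases lt_or_ge p.1 (φ p.2) with h | h
  · exact (hτ.contDiffAt (hS.mem_nhds hp)).congr_of_eventuallyEq
      (piecewiseExtension_eventuallyEq_of_fst_lt hφp h)
  · exact ((hφ.affineExtension hφI hτ).contDiffAt (hS.mem_nhds hp)).congr_of_eventuallyEq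
      (piecewiseExtension_eventuallyEq_of_le_fst hφp (hτ_graph p.2 hp.2) h)

end Normed

end

theorem piecewise_affine_extension_general
    (m : ℕ) (l : ℕ∞) (W : Set (EuclideanSpace ℝ (Fin m))) (hW : IsOpen W)
    (φ : EuclideanSpace ℝ (Fin m) → ℝ) (hφ : ContDiffOn ℝ l φ W)
    (a b : ℝ) (hφab : ∀ q ∈ W, φ q ∈ Ioo a b)
    (τ : ℝ × EuclideanSpace ℝ (Fin m) → ℝ)
    (hτ : ContDiffOn ℝ l τ (Ioo a b ×ˢ W))
    (hloc : ∃ N : Set (ℝ × EuclideanSpace ℝ (Fin m)), IsOpen N ∧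
      (∀ q ∈ W, (φ q, q) ∈ N) ∧ ∀ p ∈ N, τ p = τ (φ p.2, p.2) - p.1 + φ p.2) :
    (∀ u : ℝ, ∀ q ∈ W,
      (u ≤ φ q → (if u ≤ φ q then τ (u, q) else τ (φ q, q) - u + φ q) = τ (u, q)) ∧
      (φ q ≤ u → (if u ≤ φ q then τ (u, q) else τ (φ q, q) - u + φ q) =
        τ (φ q, q) - u + φ q)) ∧
    ContDiffOn ℝ l
      (fun p => if p.1 ≤ φ p.2 then τ p else τ (φ p.2, p.2) - p.1 + φ p.2)
      (Ioo a b ×ˢ W) ∧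
    (∀ u ∈ Ioo a b, ∀ q ∈ W, φ q ≤ u →
      HasDerivAt (fun s => if s ≤ φ q then τ (s, q) else τ (φ q, q) - s + φ q) (-1) u) ∧
    ((∀ u ∈ Ioo a b, ∀ q ∈ W, ∃ d < (0:ℝ), HasDerivAt (fun s => τ (s, q)) d u) →
      ∀ u ∈ Ioo a b, ∀ q ∈ W, ∃ d < (0:ℝ),
        HasDerivAt (fun s => if s ≤ φ q then τ (s, q) else τ (φ q, q) - s + φ q) d u) := by
  obtain ⟨N, hN, hN_graph, hN_eq⟩ := hloc
  have hτ_graph : ∀ q ∈ W, τ =ᶠ[𝓝 (φ q, q)] affineExtension φ τ := fun q hq =>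
    eventually_of_mem (hN.mem_nhds (hN_graph q hq)) hN_eq
  have hφc : ∀ q ∈ W, ContinuousAt φ q := fun q hq =>
    hφ.continuousOn.continuousAt (hW.mem_nhds hq)
  refine ⟨fun u q _ => ⟨fun h => if_pos h, piecewiseExtension_of_le_fst (p := (u, q))⟩,
    contDiffOn_piecewiseExtension isOpen_Ioo hW hφ hφab hτ hτ_graph,
    fun u _ q hq h => hasDerivAt_piecewiseExtension_fst_of_le (hφc q hq) (hτ_graph q hq) h, ?_⟩
  intro hτ_anti u hu q hq
  rcases le_or_gt (φ q) u with h | h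
  · exact ⟨-1, neg_one_lt_zero,
      hasDerivAt_piecewiseExtension_fst_of_le (hφc q hq) (hτ_graph q hq) h⟩
  · obtain ⟨d, hd, hτd⟩ := hτ_anti u hu q hq
    exact ⟨d, hd, hasDerivAt_piecewiseExtension_fst_of_lt (hφc q hq) h hτd⟩

/-- second step of the Lemma: the functions `σ_p`. If `τ` coincides with the
affine extension `τ(φ(q),q) - u + φ(q)` near the graph of `φ`, then the piecewise function `σ`
(equal to `τ` for `u ≤ φ(q)` and to the affine extension for `u ≥ φ(q)`) is well defined and
`C^l`, satisfies `∂_u σ ≡ -1` on `{u ≥ φ(q)}`, and is strictly decreasing in `u` whenever `τ`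
is. -/
theorem piecewise_affine_extension
    (m : ℕ) (l : ℕ∞) (W : Set (EuclideanSpace ℝ (Fin m))) (hW : IsOpen W)
    (φ : EuclideanSpace ℝ (Fin m) → ℝ) (hφ : ContDiffOn ℝ l φ W)
    (a b : ℝ) (hab : a < b) (hφab : ∀ q ∈ W, φ q ∈ Ioo a b)
    (τ : ℝ × EuclideanSpace ℝ (Fin m) → ℝ)
    (hτ : ContDiffOn ℝ l τ (Ioo a b ×ˢ W))
    (hloc : ∃ N : Set (ℝ × EuclideanSpace ℝ (Fin m)), IsOpen N ∧
      (∀ q ∈ W, (φ q, q) ∈ N) ∧ ∀ p ∈ N, τ p = τ (φ p.2, p.2) - p.1 + φ p.2) :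
    (∀ u : ℝ, ∀ q ∈ W,
      (u ≤ φ q → (if u ≤ φ q then τ (u, q) else τ (φ q, q) - u + φ q) = τ (u, q)) ∧
      (φ q ≤ u → (if u ≤ φ q then τ (u, q) else τ (φ q, q) - u + φ q) =
        τ (φ q, q) - u + φ q)) ∧
    ContDiffOn ℝ l
      (fun p => if p.1 ≤ φ p.2 then τ p else τ (φ p.2, p.2) - p.1 + φ p.2)
      (Ioo a b ×ˢ W) ∧
    (∀ u ∈ Ioo a b, ∀ q ∈ W, φ q ≤ u →
      HasDerivAt (fun s => if s ≤ φ q then τ (s, q) else τ (φ q, q) - s + φ q) (-1) u) ∧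
    ((∀ u ∈ Ioo a b, ∀ q ∈ W, ∃ d < (0:ℝ), HasDerivAt (fun s => τ (s, q)) d u) →
      ∀ u ∈ Ioo a b, ∀ q ∈ W, ∃ d < (0:ℝ),
        HasDerivAt (fun s => if s ≤ φ q then τ (s, q) else τ (φ q, q) - s + φ q) d u) :=
  piecewise_affine_extension_general m l W hW φ hφ a b hφab τ hτ hloc
end
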